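/- Let f(x)|𝒜 ~ N(f̂(x), s(x)²) pointwise for x in a measurable space (D, μ) with μ a finite measure. Then the expected measure of the symmetric difference between S = {x : f(x) ≥ 0} and Ŝ = {x : f̂(x) ≥ 0} satisfies E[μ(S Δ Ŝ)] = ∫_D Φ(−|f̂(x)|/s(x)) μ(dx), provided μ({x : f̂(x) = 0}) = 0 and s(x) > 0 for all x. -/

import Mathlib

open MeasureTheory ProbabilityTheory Real

/-- The standard normal cumulative distribution function. -/
noncomputable def stdNormalCDF (z : ℝ) : ℝ :=
  ∫ t in Set.Iic z, Real.exp (-t ^ 2 / 2) / Real.sqrt (2 * Real.pi)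

/-!
Fubini–Tonelli turns `E[μ(S Δ Ŝ)]` into `∫ P(x ∈ S Δ Ŝ) μ(dx)`. For `f̂(x) ≠ 0` the event
`x ∈ S Δ Ŝ` is `{f(x) < 0}` when `f̂(x) > 0` and `{f(x) ≥ 0}` when `f̂(x) < 0`; after
standardising the Gaussian `f(x)` (and reflecting it in the second case), both have probability
`Φ(−|f̂(x)|/s(x))`. The null set `{f̂ = 0}` does not affect the integral.
-/

open Set

lemma stdNormalCDF_eq_toReal_gaussianReal_Iic (z : ℝ) :
    stdNormalCDF z = (gaussianReal 0 1 (Iic z)).toReal := by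
  rw [gaussianReal_apply_eq_integral 0 one_ne_zero, ENNReal.toReal_ofReal
    (setIntegral_nonneg measurableSet_Iic fun t _ => gaussianPDFReal_nonneg 0 1 t), stdNormalCDF]
  congr with t
  simp [gaussianPDFReal, div_eq_inv_mul, mul_comm]

section Gaussian

variable (m : ℝ) {v : NNReal} (hv : v ≠ 0)
include hv

lemma gaussianReal_map_standardize :
    (gaussianReal m v).map (fun y => (y - m) / √v) = gaussianReal 0 1 := by
  have hvar : v / NNReal.mk (√v ^ 2) (sq_nonneg _) = 1 := by
    ext
    simp [hv]
  calc (gaussianReal m v).map (fun y => (y - m) / √v)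
      = ((gaussianReal m v).map (· - m)).map (· / √v) :=
        (Measure.map_map (measurable_id.div_const _) (measurable_id.sub_const _)).symm
    _ = gaussianReal 0 1 := by
        rw [gaussianReal_map_sub_const, gaussianReal_map_div_const, sub_self, zero_div, hvar]

lemma gaussianReal_Iic (a : ℝ) :
    gaussianReal m v (Iic a) = gaussianReal 0 1 (Iic ((a - m) / √v)) := by
  have hσ : 0 < √v := Real.sqrt_pos.2 (by positivity)
  rw [← gaussianReal_map_standardize m hv, Measure.map_apply (by fun_prop) measurableSet_Iic]
  congr 1
  ext y
  simp [div_le_div_iff_of_pos_right hσ]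

lemma gaussianReal_Iio (a : ℝ) :
    gaussianReal m v (Iio a) = gaussianReal 0 1 (Iic ((a - m) / √v)) := by
  have := nullSingletonClass_gaussianReal (μ := m) hv
  rw [measure_congr Iio_ae_eq_Iic, gaussianReal_Iic m hv]

lemma gaussianReal_Ici (a : ℝ) :
    gaussianReal m v (Ici a) = gaussianReal 0 1 (Iic ((m - a) / √v)) := by
  have hset : Ici a = (fun y => -y) ⁻¹' Iic (-a) := by
    ext y
    simp
  rw [hset, ← Measure.map_apply measurable_neg measurableSet_Iic,
    gaussianReal_map_neg, gaussianReal_Iic (-m) hv, neg_sub_neg]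

lemma gaussianReal_sign_mismatch (hm : m ≠ 0) :
    gaussianReal m v (symmDiff {y | 0 ≤ y} {_y | 0 ≤ m}) = gaussianReal 0 1 (Iic (-|m| / √v)) := by
  rcases hm.lt_or_gt with hneg | hpos
  · have hset : symmDiff {y : ℝ | 0 ≤ y} {_y | 0 ≤ m} = Ici 0 := by
      simp [not_le.mpr hneg, Ici]
    rw [hset, gaussianReal_Ici m hv, sub_zero, abs_of_neg hneg, neg_neg]
  · have hset : symmDiff {y : ℝ | 0 ≤ y} {_y | 0 ≤ m} = Iio 0 := by
      ext y
      simp [mem_symmDiff, hpos.le]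
    rw [hset, gaussianReal_Iio m hv, zero_sub, abs_of_pos hpos]

end Gaussian

lemma integral_toReal_measure_prodMk_comm {α β : Type*} [MeasurableSpace α] [MeasurableSpace β]
    (μ : Measure α) (ν : Measure β) [IsFiniteMeasure μ] [IsFiniteMeasure ν]
    {t : Set (α × β)} (ht : MeasurableSet t) :
    ∫ a, (ν (Prod.mk a ⁻¹' t)).toReal ∂μ = ∫ b, (μ ((·, b) ⁻¹' t)).toReal ∂ν := by
  rw [integral_toReal (measurable_measure_prodMk_left ht).aemeasurable
      (ae_of_all _ fun _ => measure_lt_top _ _),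
    integral_toReal (measurable_measure_prodMk_right ht).aemeasurable
      (ae_of_all _ fun _ => measure_lt_top _ _),
    ← Measure.prod_apply ht, ← Measure.prod_apply_symm ht]

theorem expected_symmDiff_measure_general
    {Ω : Type*} [MeasurableSpace Ω] (P : Measure Ω) [IsProbabilityMeasure P]
    {D : Type*} [MeasurableSpace D] (μ : Measure D) [IsFiniteMeasure μ]
    (f : Ω → D → ℝ) (fhat s : D → ℝ)
    (hf : Measurable (Function.uncurry f))
    (hfhat : Measurable fhat)
    (hs : ∀ x, 0 < s x)
    (hgauss : ∀ x, Measure.map (fun ω => f ω x) P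
      = gaussianReal (fhat x) ⟨(s x) ^ 2, sq_nonneg (s x)⟩)
    (hzero : μ {x | fhat x = 0} = 0) :
    ∫ ω, (μ (symmDiff {x | 0 ≤ f ω x} {x | 0 ≤ fhat x})).toReal ∂P
      = ∫ x, stdNormalCDF (-|fhat x| / s x) ∂μ := by
  set T : Set (Ω × D) := symmDiff {p | 0 ≤ Function.uncurry f p} {p | 0 ≤ fhat p.2}
  have hT : MeasurableSet T := (measurableSet_le measurable_const hf).symmDiff
    (measurableSet_le measurable_const (hfhat.comp measurable_snd))
  have hslice : ∀ x, fhat x ≠ 0 → (P ((·, x) ⁻¹' T)).toReal = stdNormalCDF (-|fhat x| / s x) := by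
    intro x hx
    have hv : (⟨s x ^ 2, sq_nonneg (s x)⟩ : NNReal) ≠ 0 :=
      fun h => (pow_pos (hs x) 2).ne' congr($h.1)
    have hmismatch : gaussianReal (fhat x) ⟨s x ^ 2, sq_nonneg (s x)⟩
        (symmDiff {y | 0 ≤ y} {_y | 0 ≤ fhat x}) = gaussianReal 0 1 (Iic (-|fhat x| / s x)) := by
      rw [gaussianReal_sign_mismatch (fhat x) hv hx]
      congr
      exact Real.sqrt_sq (hs x).le
    have hX : Measurable fun ω => f ω x := hf.comp measurable_prodMk_right
    have hmeas : MeasurableSet (symmDiff {y : ℝ | 0 ≤ y} {_y | 0 ≤ fhat x}) :=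
      measurableSet_Ici.symmDiff (.const _)
    rw [stdNormalCDF_eq_toReal_gaussianReal_Iic, ← hmismatch, ← hgauss x,
      Measure.map_apply hX hmeas]
    rfl
  calc ∫ ω, (μ (symmDiff {x | 0 ≤ f ω x} {x | 0 ≤ fhat x})).toReal ∂P
      = ∫ x, (P ((·, x) ⁻¹' T)).toReal ∂μ := integral_toReal_measure_prodMk_comm P μ hT
    _ = ∫ x, stdNormalCDF (-|fhat x| / s x) ∂μ :=
        integral_congr_ae ((measure_eq_zero_iff_ae_notMem.1 hzero).mono hslice)

/-- If `f(x) | data ~ N(f̂(x), s(x)²)` pointwise, then the expected measure of the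
symmetric difference between `S = {f ≥ 0}` and `Ŝ = {f̂ ≥ 0}` is
`∫ Φ(−|f̂(x)|/s(x)) μ(dx)`, provided `μ{f̂ = 0} = 0` and `s > 0`. -/
theorem expected_symmDiff_measure
    {Ω : Type*} [MeasurableSpace Ω] (P : Measure Ω) [IsProbabilityMeasure P]
    {D : Type*} [MeasurableSpace D] (μ : Measure D) [IsFiniteMeasure μ]
    (f : Ω → D → ℝ) (fhat s : D → ℝ)
    (hf : Measurable (Function.uncurry f))
    (hfhat : Measurable fhat) (hsmeas : Measurable s)
    (hs : ∀ x, 0 < s x)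
    (hgauss : ∀ x, Measure.map (fun ω => f ω x) P
      = gaussianReal (fhat x) ⟨(s x) ^ 2, sq_nonneg (s x)⟩)
    (hzero : μ {x | fhat x = 0} = 0) :
    ∫ ω, (μ (symmDiff {x | 0 ≤ f ω x} {x | 0 ≤ fhat x})).toReal ∂P
      = ∫ x, stdNormalCDF (-|fhat x| / s x) ∂μ :=
  expected_symmDiff_measure_general P μ f fhat s hf hfhat hs hgauss hzero
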